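/- Under the hypotheses of the pseudo-stacking construction, if additionally every vertex of P is contained in at least one facet of P not in F ∪ N ∪ {S}, then the pseudo-stacked polytope has exactly one more vertex than P: f_0(conv(P ∪ {v})) = f_0(P) + 1. -/

import Mathlib

open Set
open scoped Classical

noncomputable section

abbrev Pt (d : ℕ) := EuclideanSpace ℝ (Fin d)

/-- A polytope: convex hull of finitely many points. -/
def IsPolytope {d : ℕ} (P : Set (Pt d)) : Prop :=
  ∃ V : Finset (Pt d), P = convexHull ℝ (V : Set (Pt d))

/-- Faces of a polytope: the polytope itself, the empty set, and exposed faces. -/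
def IsFace {d : ℕ} (P F : Set (Pt d)) : Prop :=
  F = P ∨ F = ∅ ∨ ∃ (u : Pt d) (c : ℝ),
    (∀ x ∈ P, c ≤ (inner ℝ u x : ℝ)) ∧ F = {x ∈ P | (inner ℝ u x : ℝ) = c}

/-- Dimension of a face (the empty face has dimension `-1`). -/
def faceDim {d : ℕ} (F : Set (Pt d)) : ℤ :=
  if F = ∅ then -1 else (Module.finrank ℝ (vectorSpan ℝ F) : ℤ)

/-- A full-dimensional polytope in `ℝ^d`. -/
def IsDPolytope {d : ℕ} (P : Set (Pt d)) : Prop :=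
  IsPolytope P ∧ faceDim P = (d : ℤ)

def IsFacet {d : ℕ} (P F : Set (Pt d)) : Prop :=
  IsFace P F ∧ faceDim F = (d : ℤ) - 1

def IsVertex {d : ℕ} (P : Set (Pt d)) (w : Pt d) : Prop :=
  IsFace P {w}

/-- The number of vertices of `P` lying in a given set. -/
def nverts {d : ℕ} (P X : Set (Pt d)) : ℕ :=
  Nat.card {w : Pt d // IsVertex P w ∧ w ∈ X}

/-- Entry `f_k` of the f-vector: the number of `k`-dimensional faces. -/
def fk {d : ℕ} (k : ℤ) (P : Set (Pt d)) : ℕ :=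
  Nat.card {F : Set (Pt d) // IsFace P F ∧ faceDim F = k}

/-- The number of facets of `P` containing the face `G`. -/
def fdeg {d : ℕ} (P G : Set (Pt d)) : ℕ :=
  Nat.card {F : Set (Pt d) // IsFacet P F ∧ G ⊆ F}

/-- `u, c` define the supporting hyperplane of the facet `G` of `P`,
oriented so that `P` lies on the `≥` side. -/
def SupportsFacet {d : ℕ} (P G : Set (Pt d)) (u : Pt d) (c : ℝ) : Prop :=
  (∀ x ∈ P, c ≤ (inner ℝ u x : ℝ)) ∧ G = {x ∈ P | (inner ℝ u x : ℝ) = c}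

/-- Two facets are adjacent if they intersect in a ridge. -/
def AdjacentFacet {d : ℕ} (P S G : Set (Pt d)) : Prop :=
  IsFacet P S ∧ IsFacet P G ∧ S ≠ G ∧ faceDim (S ∩ G) = (d : ℤ) - 2

/-- A simplex facet: a facet with exactly `d` vertices
(combinatorially a `(d-1)`-simplex). -/
def IsSimplexFacet {d : ℕ} (P S : Set (Pt d)) : Prop :=
  IsFacet P S ∧ nverts P S = d

/-- The facet `S` of `P` is in bounded position: the intersection of the
facet halfspaces other than the one of `S` is bounded. -/
def BoundedPosition {d : ℕ} (P S : Set (Pt d)) : Prop :=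
  Bornology.IsBounded {x : Pt d | ∀ G u c, IsFacet P G → G ≠ S →
    SupportsFacet P G u c → c ≤ (inner ℝ u x : ℝ)}

/-- The region `N(S; 𝓕, 𝓝; P)`: points strictly beyond the hyperplanes of
`S` and of the facets in `𝓝`, on the hyperplanes of facets in `𝓕`, and
strictly beneath all other facet hyperplanes of `P`. -/
def PseudoRegion {d : ℕ} (P S : Set (Pt d)) (𝓕 𝓝 : Set (Set (Pt d))) :
    Set (Pt d) :=
  {v | ∀ G u c, IsFacet P G → SupportsFacet P G u c →
    ((G = S ∨ G ∈ 𝓝) → (inner ℝ u v : ℝ) < c) ∧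
    (G ∈ 𝓕 → (inner ℝ u v : ℝ) = c) ∧
    ((G ≠ S ∧ G ∉ 𝓝 ∧ G ∉ 𝓕) → c < (inner ℝ u v : ℝ))}

/-- `𝓕` is nonsimple: there is no pair of adjacent facets in `𝓕` having a
common `(d-3)`-face with `S`. -/
def Nonsimple {d : ℕ} (P S : Set (Pt d)) (𝓕 : Set (Set (Pt d))) : Prop :=
  ¬ ∃ G G' R, G ∈ 𝓕 ∧ G' ∈ 𝓕 ∧ G ≠ G' ∧ AdjacentFacet P G G' ∧
    IsFace P R ∧ faceDim R = (d : ℤ) - 3 ∧ R ⊆ G ∩ G' ∩ S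

/-- The pseudo-stacking of `P` at the point `v`: `conv (P ∪ {v})`. -/
def pseudoStack {d : ℕ} (P : Set (Pt d)) (v : Pt d) : Set (Pt d) :=
  convexHull ℝ (P ∪ {v})

/-- The standing hypotheses of the pseudo-stacking construction. -/
def PseudoStackSetup {d : ℕ} (P S : Set (Pt d)) (𝓕 𝓝 : Set (Set (Pt d))) : Prop :=
  IsDPolytope P ∧ 3 ≤ d ∧ IsSimplexFacet P S ∧ BoundedPosition P S ∧
  (∀ G ∈ 𝓕 ∪ 𝓝, AdjacentFacet P S G) ∧ Disjoint 𝓕 𝓝 ∧ Nonsimple P S 𝓕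

/-!
The new point `v` lies strictly beyond the hyperplane of `S`, so that hyperplane cuts it off
and `v` is a vertex of `conv (P ∪ {v})`. A vertex `w` of `P` lies on a facet with `v` strictly
beneath it; tilting a functional that exposes `w` in `P` towards that facet's normal exposes `w`
in `conv (P ∪ {v})` as well. Conversely a vertex of a convex hull is an extreme point, hence a
generator, so the vertices of `conv (P ∪ {v})` are exactly `v` and the vertices of `P`.
-/

open scoped RealInnerProductSpace

section Vertices

variable {d : ℕ} {P F : Set (Pt d)} {w : Pt d}

lemma faceDim_eq_zero_iff : faceDim F = 0 ↔ ∃ x, F = {x} := by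
  unfold faceDim
  split_ifs with hF
  · simp [hF]
  · rw [Nat.cast_eq_zero, Submodule.finrank_eq_zero, vectorSpan_eq_bot_iff_subsingleton,
      exists_eq_singleton_iff_nonempty_subsingleton, and_iff_right (nonempty_iff_ne_empty.2 hF)]

lemma fk_zero_eq_ncard (P : Set (Pt d)) : fk 0 P = {w | IsVertex P w}.ncard := by
  rw [fk, ← Nat.card_coe_set_eq]
  refine (Nat.card_eq_of_bijective
    (fun w => ⟨{(w : Pt d)}, w.2, faceDim_eq_zero_iff.2 ⟨w, rfl⟩⟩) ⟨?_, ?_⟩).symm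
  · intro a b hab
    exact Subtype.ext (singleton_eq_singleton_iff.1 (congrArg Subtype.val hab))
  · rintro ⟨F, hF, hdim⟩
    obtain ⟨x, rfl⟩ := faceDim_eq_zero_iff.1 hdim
    exact ⟨⟨x, hF⟩, rfl⟩

lemma IsFace.exists_supportsFacet (hF : IsFace P F) (hFP : F ≠ P) (hF0 : F ≠ ∅) :
    ∃ u c, SupportsFacet P F u c :=
  (hF.resolve_left hFP).resolve_left hF0

lemma IsFacet.exists_supportsFacet (hP : faceDim P = d) (hd : d ≠ 0) (hF : IsFacet P F) :
    ∃ u c, SupportsFacet P F u c := by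
  refine hF.1.exists_supportsFacet ?_ ?_ <;> rintro rfl <;> have := hF.2
  · omega
  · simp [faceDim] at this
    omega

lemma IsVertex.exists_supportsFacet (hP : faceDim P = d) (hd : d ≠ 0) (hw : IsVertex P w) :
    ∃ u c, SupportsFacet P {w} u c := by
  refine IsFace.exists_supportsFacet hw ?_ (singleton_ne_empty w)
  rintro rfl
  have := faceDim_eq_zero_iff.2 ⟨w, rfl⟩
  omega

lemma IsVertex.mem (hw : IsVertex P w) : w ∈ P := by
  rcases hw with hP | h0 | ⟨u, c, -, hw⟩
  · exact hP ▸ mem_singleton w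
  · exact absurd h0 (singleton_ne_empty w)
  · exact (hw.subset (mem_singleton w)).1

lemma IsVertex.of_subset {Q : Set (Pt d)} (hw : IsVertex Q w) (hPQ : P ⊆ Q) (hwP : w ∈ P) :
    IsVertex P w := by
  rcases hw with hQ | h0 | ⟨u, c, hle, hw⟩
  · exact Or.inl ((singleton_subset_iff.2 hwP).antisymm (hQ ▸ hPQ))
  · exact absurd h0 (singleton_ne_empty w)
  · refine Or.inr (Or.inr ⟨u, c, fun x hx => hle x (hPQ hx), ?_⟩)
    have hwc : ⟪u, w⟫ = c := (hw.subset (mem_singleton w)).2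
    ext x
    refine ⟨fun hx => ?_, fun hx => ?_⟩
    · rw [mem_singleton_iff.1 hx]; exact ⟨hwP, hwc⟩
    · rw [hw]; exact ⟨hPQ hx.1, hx.2⟩

lemma IsVertex.mem_extremePoints (hw : IsVertex P w) : w ∈ P.extremePoints ℝ := by
  refine ⟨hw.mem, fun x hx y hy hwxy => ?_⟩
  rcases hw with hP | h0 | ⟨u, c, hle, hw⟩
  · exact hP.superset hx
  · exact absurd h0 (singleton_ne_empty w)
  · obtain ⟨a, b, ha, hb, hab, rfl⟩ := hwxy
    have hc : ⟪u, a • x + b • y⟫ = c := (hw.subset (mem_singleton _)).2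
    rw [inner_add_right, real_inner_smul_right, real_inner_smul_right] at hc
    have hx' : ⟪u, x⟫ = c := by
      refine le_antisymm (not_lt.1 fun h => ?_) (hle x hx)
      have hc' : a * c + b * c = c := by rw [← add_mul, hab, one_mul]
      linarith [mul_lt_mul_of_pos_left h ha, mul_le_mul_of_nonneg_left (hle y hy) hb.le]
    exact hw.superset ⟨hx, hx'⟩

lemma IsVertex.mem_of_convexHull {A : Set (Pt d)} (hw : IsVertex (convexHull ℝ A) w) : w ∈ A :=
  extremePoints_convexHull_subset hw.mem_extremePoints

lemma IsPolytope.finite_vertices (hP : IsPolytope P) : {w | IsVertex P w}.Finite := by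
  obtain ⟨V, rfl⟩ := hP
  exact V.finite_toSet.subset fun w hw => IsVertex.mem_of_convexHull hw

end Vertices

section PseudoStack

variable {d : ℕ} {P F : Set (Pt d)} {u v w : Pt d} {c : ℝ}

lemma isVertex_convexHull_of_forall_inner_lt {A : Set (Pt d)} (hw : w ∈ A)
    (hA : ∀ a ∈ A, a ≠ w → ⟪u, w⟫ < ⟪u, a⟫) : IsVertex (convexHull ℝ A) w := by
  have key : ∀ x ∈ convexHull ℝ A, x = w ∨ ⟪u, w⟫ < ⟪u, x⟫ := by
    intro x hx
    rw [← insert_sdiff_self_of_mem hw] at hx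
    rcases (A \ {w}).eq_empty_or_nonempty with h0 | hne
    · rw [h0, insert_empty_eq, convexHull_singleton] at hx
      exact Or.inl hx
    rw [convexHull_insert hne, convexJoin_singleton_left, mem_iUnion₂] at hx
    obtain ⟨y, hy, a, b, ha, hb, hab, rfl⟩ := hx
    have hwy : ⟪u, w⟫ < ⟪u, y⟫ :=
      convexHull_min (fun a ha => hA a ha.1 ha.2)
        (convex_halfSpace_gt (innerₛₗ ℝ u).isLinear _) hy
    rcases hb.eq_or_lt with rfl | hb
    · left
      rw [add_zero] at hab
      rw [hab, one_smul, zero_smul, add_zero]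
    · right
      calc ⟪u, w⟫ = a * ⟪u, w⟫ + b * ⟪u, w⟫ := by rw [← add_mul, hab, one_mul]
        _ < a * ⟪u, w⟫ + b * ⟪u, y⟫ := by gcongr
        _ = ⟪u, a • w + b • y⟫ := by
          rw [inner_add_right, real_inner_smul_right, real_inner_smul_right]
  refine Or.inr (Or.inr ⟨u, ⟪u, w⟫, fun x hx => ?_, ?_⟩)
  · rcases key x hx with rfl | h
    exacts [le_rfl, h.le]
  · ext x
    refine ⟨fun hx => ?_, fun ⟨hx, hxw⟩ => ?_⟩
    · rw [mem_singleton_iff.1 hx]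
      exact ⟨subset_convexHull ℝ A hw, rfl⟩
    · rcases key x hx with rfl | h
      exacts [rfl, absurd hxw h.ne']

lemma isVertex_pseudoStack_self (hP : ∀ x ∈ P, c ≤ ⟪u, x⟫) (hv : ⟪u, v⟫ < c) :
    IsVertex (pseudoStack P v) v := by
  refine isVertex_convexHull_of_forall_inner_lt (u := u) (mem_union_right P rfl) fun a ha hav => ?_
  rcases ha with haP | rfl
  exacts [hv.trans_le (hP a haP), absurd rfl hav]

lemma SupportsFacet.isVertex_pseudoStack {uw : Pt d} {cw : ℝ} (hw : SupportsFacet P {w} uw cw)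
    (hF : SupportsFacet P F u c) (hwF : w ∈ F) (hv : c < ⟪u, v⟫) :
    IsVertex (pseudoStack P v) w := by
  obtain ⟨hwP, hwc⟩ : w ∈ P ∧ ⟪uw, w⟫ = cw := hw.2.subset (mem_singleton w)
  have hwu : ⟪u, w⟫ = c := (hF.2.subset hwF).2
  obtain ⟨t, ht, htv⟩ := exists_pos_lt_mul (sub_pos.2 hv) (cw - ⟪uw, v⟫)
  have hinner : ∀ x, ⟪uw + t • u, x⟫ = ⟪uw, x⟫ + t * ⟪u, x⟫ := fun x => by
    rw [inner_add_left, real_inner_smul_left]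
  refine isVertex_convexHull_of_forall_inner_lt (u := uw + t • u) (mem_union_left _ hwP)
    fun a ha haw => ?_
  rw [hinner, hinner, hwc, hwu]
  rcases ha with haP | rfl
  · have hwa : cw < ⟪uw, a⟫ := (hw.1 a haP).lt_of_ne fun h => haw <| by
      rw [← mem_singleton_iff, hw.2]
      exact ⟨haP, h.symm⟩
    linarith [mul_le_mul_of_nonneg_left (hF.1 a haP) ht.le]
  · linarith

end PseudoStack

theorem pseudoStack_vertices_plus_one {d : ℕ}
    (P S : Set (Pt d)) (𝓕 𝓝 : Set (Set (Pt d))) (v : Pt d)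
    (h : PseudoStackSetup P S 𝓕 𝓝) (hv : v ∈ PseudoRegion P S 𝓕 𝓝)
    (hvert : ∀ w, IsVertex P w →
      ∃ F', IsFacet P F' ∧ F' ≠ S ∧ F' ∉ 𝓕 ∧ F' ∉ 𝓝 ∧ w ∈ F') :
    fk 0 (pseudoStack P v) = fk 0 P + 1 := by
  obtain ⟨⟨hpoly, hdim⟩, hd, hS, -⟩ := h
  have hd0 : d ≠ 0 := by omega
  obtain ⟨uS, cS, hSsupp⟩ := hS.1.exists_supportsFacet hdim hd0
  have hvS : ⟪uS, v⟫ < cS := (hv S uS cS hS.1 hSsupp).1 (Or.inl rfl)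
  have hvP : v ∉ {w | IsVertex P w} := fun hvP : IsVertex P v => (hSsupp.1 v hvP.mem).not_gt hvS
  have hverts : {w | IsVertex (pseudoStack P v) w} = insert v {w | IsVertex P w} := by
    ext w
    refine ⟨fun hw => ?_, ?_⟩
    · rcases hw.mem_of_convexHull with hwP | rfl
      · exact Or.inr (hw.of_subset (subset_union_left.trans (subset_convexHull ℝ _)) hwP)
      · exact Or.inl rfl
    rintro (rfl | hw)
    · exact isVertex_pseudoStack_self hSsupp.1 hvS
    obtain ⟨F', hF', hF'S, hF'𝓕, hF'𝓝, hwF'⟩ := hvert w hw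
    obtain ⟨u, c, hF'supp⟩ := hF'.exists_supportsFacet hdim hd0
    obtain ⟨uw, cw, hwsupp⟩ := hw.exists_supportsFacet hdim hd0
    have hvF' : c < ⟪u, v⟫ := (hv F' u c hF' hF'supp).2.2 ⟨hF'S, hF'𝓝, hF'𝓕⟩
    exact hwsupp.isVertex_pseudoStack hF'supp hwF' hvF'
  rw [fk_zero_eq_ncard, fk_zero_eq_ncard, hverts, ncard_insert_of_notMem hvP hpoly.finite_vertices]
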